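/- Let w ∈ ℝ^d with ‖w‖₂ ≤ B for some B > 0, and suppose Var_{x∼U(X)}[(c+λw)·x] ≥ α‖c+λw‖₂² for some α > 0. If 0 < ρ ≤ min{1/(2BD), α/(12BD³)}, then the regularized loss satisfies the correlation lower bound ∇L_λ(w)·(c + λw) ≥ (βρα/2)·‖c + λw‖₂². -/

import Mathlib

open Finset
open scoped InnerProductSpace BigOperators

noncomputable section

/-- The Gibbs distribution on a finite set `X ⊆ ℝ^d` with parameter `w`:
`φ(x; w) = exp(w·x) / ∑_{y ∈ X} exp(w·y)`. -/
def gibbs {d : ℕ} (X : Finset (EuclideanSpace ℝ (Fin d)))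
    (w x : EuclideanSpace ℝ (Fin d)) : ℝ :=
  Real.exp ⟪w, x⟫_ℝ / ∑ y ∈ X, Real.exp ⟪w, y⟫_ℝ

/-- Expectation of a real function under the Gibbs distribution. -/
def gibbsExp {d : ℕ} (X : Finset (EuclideanSpace ℝ (Fin d)))
    (w : EuclideanSpace ℝ (Fin d)) (f : EuclideanSpace ℝ (Fin d) → ℝ) : ℝ :=
  ∑ x ∈ X, gibbs X w x * f x

/-- Variance of a real function under the Gibbs distribution. -/
def gibbsVar {d : ℕ} (X : Finset (EuclideanSpace ℝ (Fin d)))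
    (w : EuclideanSpace ℝ (Fin d)) (f : EuclideanSpace ℝ (Fin d) → ℝ) : ℝ :=
  gibbsExp X w (fun x => f x ^ 2) - (gibbsExp X w f) ^ 2

/-- Mean (a vector) of the Gibbs distribution. -/
def gibbsMean {d : ℕ} (X : Finset (EuclideanSpace ℝ (Fin d)))
    (w : EuclideanSpace ℝ (Fin d)) : EuclideanSpace ℝ (Fin d) :=
  ∑ x ∈ X, gibbs X w x • x

/-- The negative entropy `H(w) = E_{x ∼ φ(·;w)}[log φ(x;w)]`. -/
def negEnt {d : ℕ} (X : Finset (EuclideanSpace ℝ (Fin d)))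
    (w : EuclideanSpace ℝ (Fin d)) : ℝ :=
  ∑ x ∈ X, gibbs X w x * Real.log (gibbs X w x)


/-- The fast/slow mixture generator `p(x;w) = (1−β)φ(x;w) + βφ(x;ρw)`. -/
def pmix {d : ℕ} (X : Finset (EuclideanSpace ℝ (Fin d))) (β ρ : ℝ)
    (w x : EuclideanSpace ℝ (Fin d)) : ℝ :=
  (1 - β) * gibbs X w x + β * gibbs X (ρ • w) x

/-- The regularizer `R(w) = (1−β)H(w) + (β/ρ)H(ρw)`. -/
def reg {d : ℕ} (X : Finset (EuclideanSpace ℝ (Fin d))) (β ρ : ℝ)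
    (w : EuclideanSpace ℝ (Fin d)) : ℝ :=
  (1 - β) * negEnt X w + (β / ρ) * negEnt X (ρ • w)

/-- The regularized loss `L_λ(w) = E_{x∼p(·;w)}[c·x] + λ R(w)`. -/
def rloss {d : ℕ} (X : Finset (EuclideanSpace ℝ (Fin d))) (β ρ lam : ℝ)
    (c w : EuclideanSpace ℝ (Fin d)) : ℝ :=
  (∑ x ∈ X, pmix X β ρ w x * ⟪c, x⟫_ℝ) + lam * reg X β ρ w

/-- Mean (a vector) of the uniform distribution on `X`. -/
def unifMean {d : ℕ} (X : Finset (EuclideanSpace ℝ (Fin d))) : EuclideanSpace ℝ (Fin d) :=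
  (X.card : ℝ)⁻¹ • ∑ x ∈ X, x

/-- Expectation of a real function under the uniform distribution on `X`. -/
def unifExp {d : ℕ} (X : Finset (EuclideanSpace ℝ (Fin d)))
    (f : EuclideanSpace ℝ (Fin d) → ℝ) : ℝ :=
  (X.card : ℝ)⁻¹ * ∑ x ∈ X, f x

/-- Variance of a real function under the uniform distribution on `X`. -/
def unifVar {d : ℕ} (X : Finset (EuclideanSpace ℝ (Fin d)))
    (f : EuclideanSpace ℝ (Fin d) → ℝ) : ℝ :=
  unifExp X (fun x => f x ^ 2) - (unifExp X f) ^ 2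

/-!
Along a direction `v`, the derivative of `u ↦ E_{φ(·;u)}[f]` is `Cov_{φ(·;u)}[v·x, f]`, and that of
the negative entropy is `Cov_{φ(·;u)}[v·x, u·x]`. Since `(λ/ρ)(ρw) = λw`, both Gibbs components of
`L_λ` are tilted by the same vector `c + λw`, so that
`∇L_λ(w)·(c+λw) = (1-β) Var_{φ(·;w)}[(c+λw)·x] + βρ Var_{φ(·;ρw)}[(c+λw)·x]`.
The first variance is nonnegative. For the second, `|ρw·x| ≤ ρBD` gives `φ(x;ρw) ≥ e^{-2ρBD}/|X|`,
hence `Var_{φ(·;ρw)} ≥ e^{-2ρBD} Var_U ≥ (1 - 2ρBD) Var_U`; as `Var_U ≤ D²‖c+λw‖²` and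
`12ρBD³ ≤ α`, this is at least `(5/6) α ‖c+λw‖²`.
-/

open Real

theorem HasLineDerivAt.comp_const_smul {𝕜 E F : Type*} [NontriviallyNormedField 𝕜]
    [AddCommGroup E] [Module 𝕜 E] [NormedAddCommGroup F] [NormedSpace 𝕜 F]
    {f : E → F} {f' : F} {a : 𝕜} {x v : E} (hf : HasLineDerivAt 𝕜 f f' (a • x) (a • v)) :
    HasLineDerivAt 𝕜 (fun y => f (a • y)) f' x v := by
  unfold HasLineDerivAt at hf ⊢
  simpa only [smul_add, smul_comm a] using hf

section Gibbs

variable {d : ℕ} {X : Finset (EuclideanSpace ℝ (Fin d))}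
local notation "E" => EuclideanSpace ℝ (Fin d)

/-- The covariance `Cov_{φ(·;u)}[f, g]`, written so that it is visibly linear in `g`; it agrees
with `E[f g] - E[f] E[g]` because `φ(·;u)` sums to one. -/
def gibbsCov (X : Finset E) (u : E) (f g : E → ℝ) : ℝ :=
  ∑ x ∈ X, gibbs X u x * (f x - gibbsExp X u f) * g x

def gibbsLoss (X : Finset E) (c : E) (κ : ℝ) (u : E) : ℝ :=
  gibbsExp X u (fun x => ⟪c, x⟫_ℝ) + κ * negEnt X u

lemma sum_exp_inner_pos (hX : X.Nonempty) (u : E) : 0 < ∑ y ∈ X, exp ⟪u, y⟫_ℝ :=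
  sum_pos (fun _ _ => exp_pos _) hX

lemma gibbs_pos (hX : X.Nonempty) (u x : E) : 0 < gibbs X u x :=
  div_pos (exp_pos _) (sum_exp_inner_pos hX u)

lemma sum_gibbs (hX : X.Nonempty) (u : E) : ∑ x ∈ X, gibbs X u x = 1 := by
  simp only [gibbs, ← sum_div, div_self (sum_exp_inner_pos hX u).ne']

@[fun_prop]
lemma differentiable_inner_left_const (x : E) : Differentiable ℝ fun u : E => ⟪u, x⟫_ℝ :=
  differentiable_id.inner ℝ (differentiable_const x)

lemma differentiable_gibbs (hX : X.Nonempty) (x : E) : Differentiable ℝ fun u => gibbs X u x := by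
  simp only [gibbs, div_eq_mul_inv]
  fun_prop (disch := exact fun u => (sum_exp_inner_pos hX u).ne')

lemma differentiable_rloss (hX : X.Nonempty) (β ρ lam : ℝ) (c : E) :
    Differentiable ℝ (rloss X β ρ lam c) := by
  have := differentiable_gibbs hX
  unfold rloss pmix reg negEnt
  fun_prop (disch := exact fun u => (gibbs_pos hX _ _).ne')

lemma gibbsCov_mul_left (u : E) (a : ℝ) (f g : E → ℝ) :
    gibbsCov X u (fun x => a * f x) g = a * gibbsCov X u f g := by
  have hE : gibbsExp X u (fun x => a * f x) = a * gibbsExp X u f := by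
    simp only [gibbsExp, mul_sum]
    exact sum_congr rfl fun x _ => mul_left_comm _ _ _
  simp only [gibbsCov, hE, mul_sum]
  exact sum_congr rfl fun x _ => by ring

lemma gibbsCov_add_mul_right (u : E) (a : ℝ) (f g h : E → ℝ) :
    gibbsCov X u f (fun x => g x + a * h x) = gibbsCov X u f g + a * gibbsCov X u f h := by
  simp only [gibbsCov, mul_sum, ← sum_add_distrib]
  exact sum_congr rfl fun x _ => by ring

lemma gibbsCov_one_right (hX : X.Nonempty) (u : E) (f : E → ℝ) :
    gibbsCov X u f (fun _ => 1) = 0 := by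
  simp only [gibbsCov, gibbsExp, mul_one, mul_sub, sum_sub_distrib, ← sum_mul, sum_gibbs hX,
    one_mul]
  exact sub_self _

lemma gibbsCov_self_eq_sum_sq (hX : X.Nonempty) (u : E) (f : E → ℝ) :
    gibbsCov X u f f = ∑ x ∈ X, gibbs X u x * (f x - gibbsExp X u f) ^ 2 := by
  have h := gibbsCov_add_mul_right (X := X) u (gibbsExp X u f) f (fun x => f x - gibbsExp X u f)
    (fun _ => 1)
  simp only [sub_add_cancel, mul_one, gibbsCov_one_right hX, mul_zero, add_zero] at h
  rw [h, gibbsCov]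
  exact sum_congr rfl fun x _ => by ring

lemma gibbsCov_self_nonneg (hX : X.Nonempty) (u : E) (f : E → ℝ) : 0 ≤ gibbsCov X u f f := by
  rw [gibbsCov_self_eq_sum_sq hX]
  exact sum_nonneg fun x _ => mul_nonneg (gibbs_pos hX u x).le (sq_nonneg _)

lemma hasLineDerivAt_exp_inner (u v x : E) :
    HasLineDerivAt ℝ (fun u => exp ⟪u, x⟫_ℝ) (exp ⟪u, x⟫_ℝ * ⟪v, x⟫_ℝ) u v := by
  have h : HasDerivAt (fun t : ℝ => ⟪u, x⟫_ℝ + t * ⟪v, x⟫_ℝ) ⟪v, x⟫_ℝ 0 := by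
    simpa using ((hasDerivAt_id (0 : ℝ)).mul_const ⟪v, x⟫_ℝ).const_add ⟪u, x⟫_ℝ
  unfold HasLineDerivAt
  simpa only [inner_add_left, real_inner_smul_left, zero_mul, add_zero] using h.exp

lemma hasLineDerivAt_gibbs (hX : X.Nonempty) (u v x : E) :
    HasLineDerivAt ℝ (fun u => gibbs X u x)
      (gibbs X u x * (⟪v, x⟫_ℝ - gibbsExp X u (fun y => ⟪v, y⟫_ℝ))) u v := by
  have hZ := HasDerivAt.fun_sum fun y (_ : y ∈ X) => hasLineDerivAt_exp_inner u v y
  have h := (hasLineDerivAt_exp_inner u v x).div hZ (by simpa using (sum_exp_inner_pos hX u).ne')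
  simp only [zero_smul, add_zero] at h
  refine h.congr_deriv ?_
  have := (sum_exp_inner_pos hX u).ne'
  simp only [gibbs, gibbsExp, div_mul_eq_mul_div, ← sum_div]
  field_simp

lemma hasLineDerivAt_gibbsExp (hX : X.Nonempty) (u v : E) (f : E → ℝ) :
    HasLineDerivAt ℝ (fun u => gibbsExp X u f) (gibbsCov X u (fun y => ⟪v, y⟫_ℝ) f) u v :=
  HasDerivAt.fun_sum fun x (_ : x ∈ X) => (hasLineDerivAt_gibbs hX u v x).mul_const (f x)

lemma hasLineDerivAt_negEnt (hX : X.Nonempty) (u v : E) :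
    HasLineDerivAt ℝ (negEnt X) (gibbsCov X u (fun y => ⟪v, y⟫_ℝ) (fun y => ⟪u, y⟫_ℝ)) u v := by
  have hterm : ∀ x ∈ X, HasLineDerivAt ℝ (fun u => gibbs X u x * log (gibbs X u x))
      (gibbs X u x * (⟪v, x⟫_ℝ - gibbsExp X u (fun y => ⟪v, y⟫_ℝ)) * (log (gibbs X u x) + 1))
      u v := by
    intro x _
    have hq := hasLineDerivAt_gibbs hX u v x
    have hpos := gibbs_pos hX u x
    have h := HasDerivAt.mul hq (HasDerivAt.log hq (by simpa using hpos.ne'))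
    simp only [zero_smul, add_zero] at h
    refine h.congr_deriv ?_
    field_simp
  have hlog : gibbsCov X u (fun y => ⟪v, y⟫_ℝ) (fun x => log (gibbs X u x) + 1)
      = gibbsCov X u (fun y => ⟪v, y⟫_ℝ) (fun y => ⟪u, y⟫_ℝ) := by
    calc _ = gibbsCov X u (fun y => ⟪v, y⟫_ℝ)
          (fun x => ⟪u, x⟫_ℝ + (1 - log (∑ y ∈ X, exp ⟪u, y⟫_ℝ)) * 1) := by
          refine sum_congr rfl fun x _ => ?_
          dsimp only
          rw [gibbs, log_div (exp_pos _).ne' (sum_exp_inner_pos hX u).ne', log_exp]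
          ring
      _ = _ := by rw [gibbsCov_add_mul_right, gibbsCov_one_right hX, mul_zero, add_zero]
  unfold HasLineDerivAt negEnt
  rw [← hlog]
  exact HasDerivAt.fun_sum hterm

lemma hasLineDerivAt_gibbsLoss (hX : X.Nonempty) (c : E) (κ : ℝ) (u v : E) :
    HasLineDerivAt ℝ (gibbsLoss X c κ)
      (gibbsCov X u (fun y => ⟪v, y⟫_ℝ) (fun y => ⟪c + κ • u, y⟫_ℝ)) u v := by
  have h := HasDerivAt.add (hasLineDerivAt_gibbsExp hX u v fun y => ⟪c, y⟫_ℝ)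
    (HasDerivAt.const_mul κ (hasLineDerivAt_negEnt hX u v))
  simp only [inner_add_left, real_inner_smul_left, gibbsCov_add_mul_right]
  exact h

lemma rloss_eq_gibbsLoss (β ρ lam : ℝ) (c w : E) :
    rloss X β ρ lam c w = (1 - β) * gibbsLoss X c lam w + β * gibbsLoss X c (lam / ρ) (ρ • w) := by
  simp only [rloss, pmix, reg, gibbsLoss, gibbsExp, add_mul, sum_add_distrib, mul_assoc, ← mul_sum]
  ring

lemma hasLineDerivAt_rloss (hX : X.Nonempty) (β : ℝ) {ρ : ℝ} (hρ : ρ ≠ 0) (lam : ℝ) (c w v : E) :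
    HasLineDerivAt ℝ (rloss X β ρ lam c)
      ((1 - β) * gibbsCov X w (fun y => ⟪v, y⟫_ℝ) (fun y => ⟪c + lam • w, y⟫_ℝ)
        + β * ρ * gibbsCov X (ρ • w) (fun y => ⟪v, y⟫_ℝ) (fun y => ⟪c + lam • w, y⟫_ℝ)) w v := by
  have hslow := (hasLineDerivAt_gibbsLoss hX c (lam / ρ) (ρ • w) (ρ • v)).comp_const_smul
  rw [smul_smul, div_mul_cancel₀ lam hρ] at hslow
  simp only [real_inner_smul_left, gibbsCov_mul_left] at hslow
  have h := HasDerivAt.add (HasDerivAt.const_mul (1 - β) (hasLineDerivAt_gibbsLoss hX c lam w v))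
    (HasDerivAt.const_mul β hslow)
  unfold HasLineDerivAt
  simp only [rloss_eq_gibbsLoss, mul_assoc]
  exact h

lemma inner_gradient_rloss (hX : X.Nonempty) (β : ℝ) {ρ : ℝ} (hρ : ρ ≠ 0) (lam : ℝ) (c w v : E) :
    ⟪gradient (rloss X β ρ lam c) w, v⟫_ℝ
      = (1 - β) * gibbsCov X w (fun y => ⟪v, y⟫_ℝ) (fun y => ⟪c + lam • w, y⟫_ℝ)
        + β * ρ * gibbsCov X (ρ • w) (fun y => ⟪v, y⟫_ℝ) (fun y => ⟪c + lam • w, y⟫_ℝ) := by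
  rw [inner_gradient_left, ← (differentiable_rloss hX β ρ lam c w).lineDeriv_eq_fderiv,
    (hasLineDerivAt_rloss hX β hρ lam c w v).lineDeriv]

lemma exp_neg_two_mul_div_card_le_gibbs (hX : X.Nonempty) {u : E} {M : ℝ}
    (hM : ∀ y ∈ X, |⟪u, y⟫_ℝ| ≤ M) {x : E} (hx : x ∈ X) :
    exp (-(2 * M)) / X.card ≤ gibbs X u x := by
  have hZ : ∑ y ∈ X, exp ⟪u, y⟫_ℝ ≤ X.card * exp M := by
    simpa using sum_le_sum fun y hy => exp_le_exp.mpr (abs_le.mp (hM y hy)).2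
  calc exp (-(2 * M)) / X.card = exp (-M) / (X.card * exp M) := by
        rw [div_mul_eq_div_div_swap, ← exp_sub]
        ring_nf
    _ ≤ gibbs X u x :=
        div_le_div₀ (exp_pos _).le (exp_le_exp.mpr (neg_le_of_abs_le (hM x hx)))
          (sum_exp_inner_pos hX u) hZ

lemma unifVar_add_sq_eq (hX : X.Nonempty) (f : E → ℝ) (a : ℝ) :
    unifVar X f + (unifExp X f - a) ^ 2 = (X.card : ℝ)⁻¹ * ∑ x ∈ X, (f x - a) ^ 2 := by
  have hn : (X.card : ℝ) ≠ 0 := by exact_mod_cast hX.card_pos.ne'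
  simp only [unifVar, unifExp, sub_sq, sum_add_distrib, sum_sub_distrib, ← sum_mul, ← mul_sum,
    sum_const, nsmul_eq_mul]
  field_simp
  ring

lemma unifVar_le_mean_sq_sub (hX : X.Nonempty) (f : E → ℝ) (a : ℝ) :
    unifVar X f ≤ (X.card : ℝ)⁻¹ * ∑ x ∈ X, (f x - a) ^ 2 := by
  rw [← unifVar_add_sq_eq hX f a]
  exact le_add_of_nonneg_right (sq_nonneg _)

lemma unifVar_inner_le (hX : X.Nonempty) {D : ℝ} (hD : ∀ x ∈ X, ‖x‖ ≤ D) (v : E) :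
    unifVar X (fun x => ⟪v, x⟫_ℝ) ≤ D ^ 2 * ‖v‖ ^ 2 := by
  have hn : (X.card : ℝ) ≠ 0 := by exact_mod_cast hX.card_pos.ne'
  have hsq : ∀ x ∈ X, (⟪v, x⟫_ℝ - 0) ^ 2 ≤ D ^ 2 * ‖v‖ ^ 2 := fun x hx => by
    rw [sub_zero, ← mul_pow, ← sq_abs]
    refine pow_le_pow_left₀ (abs_nonneg _) ?_ 2
    calc |⟪v, x⟫_ℝ| ≤ ‖v‖ * ‖x‖ := abs_real_inner_le_norm v x
      _ ≤ D * ‖v‖ := by rw [mul_comm]; exact mul_le_mul_of_nonneg_right (hD x hx) (norm_nonneg v)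
  calc unifVar X (fun x => ⟪v, x⟫_ℝ) ≤ (X.card : ℝ)⁻¹ * ∑ x ∈ X, (⟪v, x⟫_ℝ - 0) ^ 2 :=
        unifVar_le_mean_sq_sub hX _ 0
    _ ≤ (X.card : ℝ)⁻¹ * ∑ _x ∈ X, D ^ 2 * ‖v‖ ^ 2 := by gcongr with x hx; exact hsq x hx
    _ = D ^ 2 * ‖v‖ ^ 2 := by rw [sum_const, nsmul_eq_mul, inv_mul_cancel_left₀ hn]

lemma exp_mul_unifVar_le_gibbsCov_self (hX : X.Nonempty) {u : E} {M : ℝ}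
    (hM : ∀ y ∈ X, |⟪u, y⟫_ℝ| ≤ M) (f : E → ℝ) :
    exp (-(2 * M)) * unifVar X f ≤ gibbsCov X u f f := by
  set m := gibbsExp X u f
  calc exp (-(2 * M)) * unifVar X f
      ≤ exp (-(2 * M)) * ((X.card : ℝ)⁻¹ * ∑ x ∈ X, (f x - m) ^ 2) :=
        mul_le_mul_of_nonneg_left (unifVar_le_mean_sq_sub hX f m) (exp_pos _).le
    _ = ∑ x ∈ X, exp (-(2 * M)) / X.card * (f x - m) ^ 2 := by
        rw [mul_sum, mul_sum]
        exact sum_congr rfl fun x _ => by ring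
    _ ≤ ∑ x ∈ X, gibbs X u x * (f x - m) ^ 2 :=
        sum_le_sum fun x hx => mul_le_mul_of_nonneg_right
          (exp_neg_two_mul_div_card_le_gibbs hX hM hx) (sq_nonneg _)
    _ = gibbsCov X u f f := (gibbsCov_self_eq_sum_sq hX u f).symm

lemma exp_mul_unifVar_le_gibbsCov_smul (hX : X.Nonempty) {D B ρ : ℝ} (hD : ∀ x ∈ X, ‖x‖ ≤ D)
    {w : E} (hw : ‖w‖ ≤ B) (hρ : 0 ≤ ρ) (f : E → ℝ) :
    exp (-(2 * (ρ * (B * D)))) * unifVar X f ≤ gibbsCov X (ρ • w) f f := by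
  refine exp_mul_unifVar_le_gibbsCov_self hX (fun y hy => ?_) f
  rw [real_inner_smul_left, abs_mul, abs_of_nonneg hρ]
  exact mul_le_mul_of_nonneg_left ((abs_real_inner_le_norm w y).trans
    (mul_le_mul hw (hD y hy) (norm_nonneg y) ((norm_nonneg w).trans hw))) hρ

end Gibbs

theorem rloss_correlation_lower_bound_general {d : ℕ}
    (X : Finset (EuclideanSpace ℝ (Fin d))) (hX : X.Nonempty)
    (D : ℝ) (hDpos : 0 < D) (hD : ∀ x ∈ X, ‖x‖ ≤ D)
    (β ρ : ℝ) (hβ : β ∈ Set.Ioo (0 : ℝ) 1) (hρ : ρ ∈ Set.Ioo (0 : ℝ) 1)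
    (c : EuclideanSpace ℝ (Fin d)) (lam : ℝ)
    (w : EuclideanSpace ℝ (Fin d)) (B : ℝ) (hB : 0 < B) (hw : ‖w‖ ≤ B)
    (α : ℝ) (hα : 0 < α)
    (hvar : unifVar X (fun x => ⟪c + lam • w, x⟫_ℝ) ≥ α * ‖c + lam • w‖ ^ 2)
    (hρsmall : ρ ≤ min (1 / (2 * B * D)) (α / (12 * B * D ^ 3))) :
    ⟪gradient (rloss X β ρ lam c) w, c + lam • w⟫_ℝ
      ≥ (β * ρ * α / 2) * ‖c + lam • w‖ ^ 2 := by
  obtain ⟨hβ0, hβ1⟩ := hβ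
  obtain ⟨hρ0, -⟩ := hρ
  set v := c + lam • w
  have hslow := exp_mul_unifVar_le_gibbsCov_smul hX hD hw hρ0.le fun y => ⟪v, y⟫_ℝ
  have hfast := gibbsCov_self_nonneg hX w fun y => ⟪v, y⟫_ℝ
  have hVU := unifVar_inner_le hX hD v
  have hρα : ρ * (12 * B * D ^ 3) ≤ α :=
    (le_div_iff₀ (by positivity)).mp (hρsmall.trans (min_le_right _ _))
  have hexp := add_one_le_exp (-(2 * (ρ * (B * D))))
  have hαv : 0 ≤ α * ‖v‖ ^ 2 := by positivity
  have key : α / 2 * ‖v‖ ^ 2 ≤ gibbsCov X (ρ • w) (fun y => ⟪v, y⟫_ℝ) (fun y => ⟪v, y⟫_ℝ) :=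
    calc α / 2 * ‖v‖ ^ 2 ≤ (1 - 2 * (ρ * (B * D))) * unifVar X (fun x => ⟪v, x⟫_ℝ) := by
          linarith [mul_le_mul_of_nonneg_left hVU (by positivity : 0 ≤ 2 * (ρ * (B * D))),
            mul_le_mul_of_nonneg_right hρα (sq_nonneg ‖v‖)]
      _ ≤ exp (-(2 * (ρ * (B * D)))) * unifVar X (fun x => ⟪v, x⟫_ℝ) :=
          mul_le_mul_of_nonneg_right (by linarith) (hαv.trans hvar)
      _ ≤ _ := hslow
  rw [ge_iff_le, inner_gradient_rloss hX β hρ0.ne']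
  linarith [mul_le_mul_of_nonneg_left key (by positivity : 0 ≤ β * ρ),
    mul_nonneg (sub_nonneg.mpr hβ1.le) hfast]

/-- If `‖w‖₂ ≤ B` and `Var_{x∼U(X)}[(c+λw)·x] ≥ α‖c+λw‖₂²`, and
`0 < ρ ≤ min{1/(2BD), α/(12BD³)}`, then the regularized loss satisfies
`∇L_λ(w)·(c + λw) ≥ (βρα/2)·‖c + λw‖₂²`. -/
theorem rloss_correlation_lower_bound {d : ℕ} (hd : 1 ≤ d)
    (X : Finset (EuclideanSpace ℝ (Fin d))) (hX : X.Nonempty)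
    (D : ℝ) (hDpos : 0 < D) (hD : ∀ x ∈ X, ‖x‖ ≤ D)
    (β ρ : ℝ) (hβ : β ∈ Set.Ioo (0 : ℝ) 1) (hρ : ρ ∈ Set.Ioo (0 : ℝ) 1)
    (c : EuclideanSpace ℝ (Fin d)) (lam : ℝ) (hlam : 0 < lam)
    (w : EuclideanSpace ℝ (Fin d)) (B : ℝ) (hB : 0 < B) (hw : ‖w‖ ≤ B)
    (α : ℝ) (hα : 0 < α)
    (hvar : unifVar X (fun x => ⟪c + lam • w, x⟫_ℝ) ≥ α * ‖c + lam • w‖ ^ 2)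
    (hρsmall : ρ ≤ min (1 / (2 * B * D)) (α / (12 * B * D ^ 3))) :
    ⟪gradient (rloss X β ρ lam c) w, c + lam • w⟫_ℝ
      ≥ (β * ρ * α / 2) * ‖c + lam • w‖ ^ 2 :=
  rloss_correlation_lower_bound_general X hX D hDpos hD β ρ hβ hρ c lam w B hB hw α hα hvar hρsmall

end
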